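/- Let (X, C, R, κ) be a weakly reversible mass-action system with complex matrix Y ∈ ℝ^{n×m}, Laplacian A_κ, incidence range 𝓘 = ran I, G(z) = A_κ e^z, and K = Π_𝓘(ran Y^⊤). Let P be a positive stoichiometric class and F : K → 𝓘^⊥ the unique continuous function with Y^⊤ log P = {z + F(z) : z ∈ K}. Then G(Y^⊤ log P) ∩ (ran Y^⊤)^⊥ = Ĝ(K) ∩ K^⊥, where Ĝ = G ∘ (Id + F). In particular E₊ ∩ P ≠ ∅ if and only if Ĝ(K) ∩ K^⊥ ≠ ∅. -/

import Mathlib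

open Matrix

/-- The range of `mulVec A`, viewed as a subspace of Euclidean space. -/
noncomputable def matRangeE {m : ℕ} {k : Type*} [Fintype k]
    (A : Matrix (Fin m) k ℝ) : Submodule ℝ (EuclideanSpace ℝ (Fin m)) :=
  Submodule.comap
    (WithLp.linearEquiv 2 ℝ (Fin m → ℝ) : EuclideanSpace ℝ (Fin m) →ₗ[ℝ] (Fin m → ℝ))
    (LinearMap.range A.mulVecLin)

/-- The incidence matrix of the digraph with vertex set `Fin m` and edge set `R`. -/
noncomputable def incMatrix (m : ℕ) (R : Finset (Fin m × Fin m)) :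
    Matrix (Fin m) {e // e ∈ R} ℝ :=
  fun i e => (if (e : Fin m × Fin m).2 = i then (1 : ℝ) else 0) -
    (if (e : Fin m × Fin m).1 = i then (1 : ℝ) else 0)

/-- The Laplacian `A_κ` of the labelled digraph `(C, R, κ)` on `Fin m`. -/
noncomputable def lapMatrix (m : ℕ) (R : Finset (Fin m × Fin m))
    (κ : Fin m × Fin m → ℝ) : Matrix (Fin m) (Fin m) ℝ :=
  fun a b =>
    if a = b then -(∑ k, if (a, k) ∈ R then κ (a, k) else 0)
    else if (b, a) ∈ R then κ (b, a) else 0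

/-! The Laplacian factors through the incidence matrix, so `G` takes values in `𝓘`, and for
vectors of `𝓘` orthogonality to `ran Yᵀ` is the same as orthogonality to its projection `K`.
The parametrisation `Yᵀ log P = {z + F z}` transports `G(Yᵀ log P)` onto `Ĝ(K)`, and since
`x^Y = exp (Yᵀ log x)`, a point `x ∈ P` lies in `E₊` exactly when `G(Yᵀ log x) ⊥ ran Yᵀ`. -/

theorem lapMatrix_eq_incMatrix_mul {m : ℕ} {R : Finset (Fin m × Fin m)}
    (hloop : ∀ e ∈ R, e.1 ≠ e.2) (κ : Fin m × Fin m → ℝ) :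
    lapMatrix m R κ = incMatrix m R * Matrix.of fun (e : {e // e ∈ R}) (b : Fin m) =>
      if (e : Fin m × Fin m).1 = b then κ e else 0 := by
  ext a b
  simp only [mul_apply, incMatrix, of_apply]
  rw [Finset.sum_coe_sort R fun e => ((if e.2 = a then (1 : ℝ) else 0) - if e.1 = a then 1 else 0) *
      if e.1 = b then κ e else 0, ← Fintype.sum_ite_mem, Fintype.sum_prod_type, Finset.sum_comm]
  have hsummand : ∀ x y, (if (x, y) ∈ R then
      ((if y = a then (1 : ℝ) else 0) - if x = a then 1 else 0) * (if x = b then κ (x, y) else 0)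
      else 0) = if x = b then (if (b, y) ∈ R then
        ((if y = a then (1 : ℝ) else 0) - if b = a then 1 else 0) * κ (b, y) else 0) else 0 := by
    intro x y
    split_ifs <;> simp_all
  simp only [hsummand, Fintype.sum_ite_eq']
  by_cases hab : a = b
  · subst hab
    rw [lapMatrix, if_pos rfl, ← Finset.sum_neg_distrib]
    refine Finset.sum_congr rfl fun y _ => ?_
    simp only [if_true]
    split_ifs with hR hy
    · exact absurd hy.symm (hloop _ hR)
    · simp
    · simp
  · simp only [lapMatrix, hab, if_false, if_neg (Ne.symm hab), sub_zero]
    rw [Fintype.sum_eq_single a fun y hy => by simp [hy]]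
    simp

theorem toLp_mulVec_mem_matRangeE {m : ℕ} {k : Type*} [Fintype k] (A : Matrix (Fin m) k ℝ)
    (u : k → ℝ) : (WithLp.linearEquiv 2 ℝ (Fin m → ℝ)).symm (A *ᵥ u) ∈ matRangeE A :=
  ⟨u, rfl⟩

theorem mem_orthogonal_matRangeE_transpose_iff {ι : Type*} [Fintype ι] {m : ℕ}
    (Y : Matrix ι (Fin m) ℝ) (w : EuclideanSpace ℝ (Fin m)) :
    w ∈ (matRangeE Yᵀ)ᗮ ↔ Y *ᵥ w.ofLp = 0 := by
  have hinner : ∀ v : ι → ℝ,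
      inner ℝ ((WithLp.linearEquiv 2 ℝ (Fin m → ℝ)).symm (Yᵀ *ᵥ v)) w = v ⬝ᵥ (Y *ᵥ w.ofLp) := by
    intro v
    rw [dotProduct_mulVec, ← mulVec_transpose, dotProduct_comm]
    rfl
  rw [← dotProduct_eq_zero_iff, Submodule.mem_orthogonal]
  refine ⟨fun h v => ?_, ?_⟩
  · rw [dotProduct_comm, ← hinner]
    exact h _ ⟨v, rfl⟩
  · rintro h u ⟨v, hv⟩
    rw [LinearEquiv.coe_coe, mulVecLin_apply] at hv
    rw [← (WithLp.linearEquiv 2 ℝ (Fin m → ℝ)).symm_apply_apply u, ← hv, hinner,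
      dotProduct_comm, h]

theorem mem_orthogonal_map_starProjection_iff {𝕜 E : Type*} [RCLike 𝕜] [NormedAddCommGroup E]
    [InnerProductSpace 𝕜 E] (U V : Submodule 𝕜 E) [U.HasOrthogonalProjection] {w : E}
    (hw : w ∈ U) : w ∈ (V.map U.starProjection.toLinearMap)ᗮ ↔ w ∈ Vᗮ := by
  simp [Submodule.mem_orthogonal, Submodule.inner_starProjection_left_eq_right,
    Submodule.starProjection_eq_self_iff.mpr hw]

theorem prod_rpow_eq_exp_mulVec_log {ι κ : Type*} [Fintype ι] (Y : Matrix ι κ ℝ) {x : ι → ℝ}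
    (hx : ∀ i, 0 < x i) (j : κ) :
    ∏ i, x i ^ Y i j = Real.exp ((Yᵀ *ᵥ fun i => Real.log (x i)) j) := by
  simp only [mulVec, dotProduct, Real.exp_sum, transpose_apply]
  exact Finset.prod_congr rfl fun i _ => by rw [Real.rpow_def_of_pos (hx i), mul_comm]

theorem exists_mem_iff_exists_of_setOf_eq {α β γ : Type*} {P : Set α} {f : α → β} {g : γ → β}
    (h : {w | ∃ x ∈ P, w = f x} = {w | ∃ z, w = g z}) (Q : β → Prop) :
    (∃ x ∈ P, Q (f x)) ↔ ∃ z, Q (g z) := by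
  constructor
  · rintro ⟨x, hx, hQ⟩
    obtain ⟨z, hz⟩ : f x ∈ {w | ∃ z, w = g z} := h ▸ ⟨x, hx, rfl⟩
    exact ⟨z, hz ▸ hQ⟩
  · rintro ⟨z, hQ⟩
    obtain ⟨x, hx, hz⟩ : g z ∈ {w | ∃ x ∈ P, w = f x} := h ▸ ⟨z, rfl⟩
    exact ⟨x, hx, hz ▸ hQ⟩

theorem stmt_18_general (n m : ℕ) (Y : Matrix (Fin n) (Fin m) ℝ)
    (R : Finset (Fin m × Fin m)) (hloop : ∀ e ∈ R, e.1 ≠ e.2)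
    (κ : Fin m × Fin m → ℝ)
    (p : Fin n → ℝ)
    (𝓘 : Submodule ℝ (EuclideanSpace ℝ (Fin m))) (h𝓘 : 𝓘 = matRangeE (incMatrix m R))
    (K : Submodule ℝ (EuclideanSpace ℝ (Fin m)))
    (hK : K = Submodule.map
      (𝓘.subtype.comp 𝓘.orthogonalProjectionOnto.toLinearMap) (matRangeE Yᵀ))
    (P : Set (Fin n → ℝ))
    (hP : P = {x | (∀ i, 0 < x i) ∧
      ∃ u : {e // e ∈ R} → ℝ, x = p + (Y * incMatrix m R).mulVec u})
    (F : K → 𝓘ᗮ)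
    (hF : {w : EuclideanSpace ℝ (Fin m) | ∃ x ∈ P,
        w = (WithLp.linearEquiv 2 ℝ (Fin m → ℝ)).symm
          (Yᵀ.mulVec (fun i => Real.log (x i)))} =
      {w : EuclideanSpace ℝ (Fin m) | ∃ z : K, w = (z : _) + (F z : _)}) :
    ({w : EuclideanSpace ℝ (Fin m) |
        (∃ x ∈ P, w = (WithLp.linearEquiv 2 ℝ (Fin m → ℝ)).symm
          ((lapMatrix m R κ).mulVec
            (fun j => Real.exp (Yᵀ.mulVec (fun i => Real.log (x i)) j)))) ∧
        w ∈ (matRangeE Yᵀ)ᗮ} =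
      {w : EuclideanSpace ℝ (Fin m) |
        (∃ z : K, w = (WithLp.linearEquiv 2 ℝ (Fin m → ℝ)).symm
          ((lapMatrix m R κ).mulVec
            (fun j => Real.exp ((z : EuclideanSpace ℝ (Fin m)) j +
              ((F z : EuclideanSpace ℝ (Fin m))) j)))) ∧
        w ∈ Kᗮ}) ∧
    ((∃ x ∈ P, Y.mulVec ((lapMatrix m R κ).mulVec (fun j => ∏ i, x i ^ Y i j)) = 0) ↔
      (∃ z : K, (WithLp.linearEquiv 2 ℝ (Fin m → ℝ)).symm
          ((lapMatrix m R κ).mulVec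
            (fun j => Real.exp ((z : EuclideanSpace ℝ (Fin m)) j +
              ((F z : EuclideanSpace ℝ (Fin m))) j))) ∈ Kᗮ)) := by
  set L := WithLp.linearEquiv 2 ℝ (Fin m → ℝ)
  set G : EuclideanSpace ℝ (Fin m) → EuclideanSpace ℝ (Fin m) :=
    fun v => L.symm (lapMatrix m R κ *ᵥ fun j => Real.exp (v j))
  have hG : ∀ v, G v ∈ 𝓘 := fun v => by
    simp only [G, h𝓘, lapMatrix_eq_incMatrix_mul hloop, ← mulVec_mulVec]
    exact toLp_mulVec_mem_matRangeE _ _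
  have hlog : ∀ Q : EuclideanSpace ℝ (Fin m) → Prop,
      (∃ x ∈ P, Q (L.symm (Yᵀ *ᵥ fun i => Real.log (x i)))) ↔ ∃ z : K, Q (z + F z) :=
    exists_mem_iff_exists_of_setOf_eq hF
  have hperp : ∀ w ∈ 𝓘, w ∈ (matRangeE Yᵀ)ᗮ ↔ w ∈ Kᗮ := fun w hw => by
    subst hK
    exact (mem_orthogonal_map_starProjection_iff 𝓘 _ hw).symm
  refine ⟨?_, ?_⟩
  · ext w
    refine (and_congr_left' (hlog (w = G ·))).trans (and_congr_right ?_)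
    rintro ⟨z, rfl⟩
    exact hperp _ (hG _)
  · have hpos : ∀ x ∈ P, ∀ i, 0 < x i := fun x hx => by
      rw [hP] at hx
      exact hx.1
    calc (∃ x ∈ P, Y *ᵥ (lapMatrix m R κ *ᵥ fun j => ∏ i, x i ^ Y i j) = 0)
        ↔ ∃ x ∈ P, G (L.symm (Yᵀ *ᵥ fun i => Real.log (x i))) ∈ (matRangeE Yᵀ)ᗮ := by
          refine exists_congr fun x => and_congr_right fun hx => ?_
          simp only [mem_orthogonal_matRangeE_transpose_iff,
            prod_rpow_eq_exp_mulVec_log Y (hpos x hx)]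
          rfl
      _ ↔ ∃ z : K, G (z + F z) ∈ (matRangeE Yᵀ)ᗮ := hlog (G · ∈ (matRangeE Yᵀ)ᗮ)
      _ ↔ ∃ z : K, G (z + F z) ∈ Kᗮ := exists_congr fun z => hperp _ (hG _)

/-- For a weakly reversible mass-action system with complex matrix `Y`, Laplacian `A_κ`,
`𝓘 = ran I`, `G(z) = A_κ e^z`, `K = Π_𝓘(ran Y^⊤)`, positive stoichiometric class `P`,
and `F : K → 𝓘^⊥` the unique continuous function with `Y^⊤ log P = {z + F(z) : z ∈ K}`:
`G(Y^⊤ log P) ∩ (ran Y^⊤)^⊥ = Ĝ(K) ∩ K^⊥` where `Ĝ = G ∘ (Id + F)`; in particular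
`E₊ ∩ P ≠ ∅` iff `Ĝ(K) ∩ K^⊥ ≠ ∅`. -/
theorem stmt_18 (n m : ℕ) (Y : Matrix (Fin n) (Fin m) ℝ)
    (R : Finset (Fin m × Fin m)) (hloop : ∀ e ∈ R, e.1 ≠ e.2)
    (hwr : ∀ i j : Fin m,
      Relation.ReflTransGen (fun a b => (a, b) ∈ R ∨ (b, a) ∈ R) i j →
      Relation.ReflTransGen (fun a b => (a, b) ∈ R) i j)
    (κ : Fin m × Fin m → ℝ) (hκ : ∀ e ∈ R, 0 < κ e)
    (p : Fin n → ℝ) (hp : ∀ i, 0 < p i)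
    (𝓘 : Submodule ℝ (EuclideanSpace ℝ (Fin m))) (h𝓘 : 𝓘 = matRangeE (incMatrix m R))
    (K : Submodule ℝ (EuclideanSpace ℝ (Fin m)))
    (hK : K = Submodule.map
      (𝓘.subtype.comp 𝓘.orthogonalProjectionOnto.toLinearMap) (matRangeE Yᵀ))
    (P : Set (Fin n → ℝ))
    (hP : P = {x | (∀ i, 0 < x i) ∧
      ∃ u : {e // e ∈ R} → ℝ, x = p + (Y * incMatrix m R).mulVec u})
    (F : K → 𝓘ᗮ) (hFcont : Continuous F)
    (hF : {w : EuclideanSpace ℝ (Fin m) | ∃ x ∈ P,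
        w = (WithLp.linearEquiv 2 ℝ (Fin m → ℝ)).symm
          (Yᵀ.mulVec (fun i => Real.log (x i)))} =
      {w : EuclideanSpace ℝ (Fin m) | ∃ z : K, w = (z : _) + (F z : _)}) :
    ({w : EuclideanSpace ℝ (Fin m) |
        (∃ x ∈ P, w = (WithLp.linearEquiv 2 ℝ (Fin m → ℝ)).symm
          ((lapMatrix m R κ).mulVec
            (fun j => Real.exp (Yᵀ.mulVec (fun i => Real.log (x i)) j)))) ∧
        w ∈ (matRangeE Yᵀ)ᗮ} =
      {w : EuclideanSpace ℝ (Fin m) |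
        (∃ z : K, w = (WithLp.linearEquiv 2 ℝ (Fin m → ℝ)).symm
          ((lapMatrix m R κ).mulVec
            (fun j => Real.exp ((z : EuclideanSpace ℝ (Fin m)) j +
              ((F z : EuclideanSpace ℝ (Fin m))) j)))) ∧
        w ∈ Kᗮ}) ∧
    ((∃ x ∈ P, Y.mulVec ((lapMatrix m R κ).mulVec (fun j => ∏ i, x i ^ Y i j)) = 0) ↔
      (∃ z : K, (WithLp.linearEquiv 2 ℝ (Fin m → ℝ)).symm
          ((lapMatrix m R κ).mulVec
            (fun j => Real.exp ((z : EuclideanSpace ℝ (Fin m)) j +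
              ((F z : EuclideanSpace ℝ (Fin m))) j))) ∈ Kᗮ)) :=
  stmt_18_general n m Y R hloop κ p 𝓘 h𝓘 K hK P hP F hF
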